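/- If H' is a 6-partite intersecting hypergraph with 8 edges and τ(H') = 4, then any two vertices of degree 3 in H' lie in a common edge. -/

import Mathlib

def Intersecting {V : Type*} (E : Finset (Finset V)) : Prop :=
  ∀ e ∈ E, ∀ f ∈ E, ∃ v, v ∈ e ∧ v ∈ f

def IsCover {V : Type*} (E : Finset (Finset V)) (C : Finset V) : Prop :=
  ∀ e ∈ E, ∃ v ∈ C, v ∈ e

noncomputable def coverNum {V : Type*} (E : Finset (Finset V)) : ℕ :=
  sInf {n | ∃ C : Finset V, IsCover E C ∧ C.card = n}

def Partite {V : Type*} (r : ℕ) (part : V → Fin r) (E : Finset (Finset V)) : Prop :=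
  ∀ e ∈ E, ∀ i : Fin r, (e.filter (fun v => part v = i)).card = 1

open Classical in
noncomputable def deg {V : Type*} (E : Finset (Finset V)) (v : V) : ℕ :=
  (E.filter (fun e => v ∈ e)).card


/-!
If no edge contained both `u` and `v`, the stars of `u` and `v` would be disjoint and account for
`3 + 3` of the `8` edges. The two remaining edges meet in some vertex `w`, so `{u, v, w}` would be a
cover of size `3`, contradicting `τ = 4`.
-/

section

open Finset

variable {V : Type*}

theorem coverNum_le_card {E : Finset (Finset V)} {C : Finset V} (hC : IsCover E C) :
    coverNum E ≤ C.card :=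
  Nat.sInf_le ⟨C, hC, rfl⟩

theorem IsCover.insert_of_filter_notMem [DecidableEq V] {E : Finset (Finset V)} {C : Finset V}
    (u : V) (hC : IsCover (E.filter (u ∉ ·)) C) : IsCover E (insert u C) := by
  intro e he
  by_cases hu : u ∈ e
  · exact ⟨u, mem_insert_self u C, hu⟩
  · obtain ⟨w, hwC, hwe⟩ := hC e (mem_filter.2 ⟨he, hu⟩)
    exact ⟨w, mem_insert_of_mem hwC, hwe⟩

theorem Intersecting.mono {E F : Finset (Finset V)} (hi : Intersecting E) (hFE : F ⊆ E) :
    Intersecting F :=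
  fun e he f hf => hi e (hFE he) f (hFE hf)

theorem Intersecting.exists_isCover_card_le_one {E : Finset (Finset V)} (hi : Intersecting E)
    (hE : E.card ≤ 2) : ∃ C : Finset V, C.card ≤ 1 ∧ IsCover E C := by
  classical
  rcases Nat.le_succ_iff.1 hE with hE | hE
  · rcases Nat.le_one_iff_eq_zero_or_eq_one.1 hE with hE | hE
    · exact ⟨∅, by simp, fun e he => absurd he (by simp [card_eq_zero.1 hE])⟩
    · obtain ⟨e, rfl⟩ := card_eq_one.1 hE
      obtain ⟨w, hw, -⟩ := hi e (mem_singleton_self e) e (mem_singleton_self e)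
      exact ⟨{w}, by simp, fun f hf => ⟨w, mem_singleton_self w, mem_singleton.1 hf ▸ hw⟩⟩
  · obtain ⟨e, f, -, rfl⟩ := card_eq_two.1 hE
    obtain ⟨w, hwe, hwf⟩ := hi e (by simp) f (by simp)
    refine ⟨{w}, by simp, fun g hg => ⟨w, mem_singleton_self w, ?_⟩⟩
    rcases mem_insert.1 hg with rfl | hg
    · exact hwe
    · exact mem_singleton.1 hg ▸ hwf

theorem deg_eq_card_filter [DecidableEq V] (E : Finset (Finset V)) (u : V) :
    deg E u = (E.filter (u ∈ ·)).card := by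
  unfold deg
  congr

theorem card_filter_notMem_add_deg_add_deg [DecidableEq V] {E : Finset (Finset V)} {u v : V}
    (hE : ∀ e ∈ E, u ∈ e → v ∉ e) :
    ((E.filter (u ∉ ·)).filter (v ∉ ·)).card + deg E u + deg E v = E.card := by
  have hstar_v : (E.filter (u ∉ ·)).filter (v ∈ ·) = E.filter (v ∈ ·) := by
    ext e
    simp only [mem_filter]
    exact ⟨fun h => ⟨h.1.1, h.2⟩, fun h => ⟨⟨h.1, fun hu => hE e h.1 hu h.2⟩, h.2⟩⟩
  have hsplit_u := card_filter_add_card_filter_not (s := E) (u ∈ ·)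
  have hsplit_v := hstar_v ▸ card_filter_add_card_filter_not (s := E.filter (u ∉ ·)) (v ∈ ·)
  rw [deg_eq_card_filter, deg_eq_card_filter]
  omega

end

open Finset in
theorem stmt4_general {V : Type*} (E : Finset (Finset V))
    (hi : Intersecting E) (h8 : E.card = 8)
    (hτ : coverNum E = 4) :
    ∀ u v : V, u ≠ v → deg E u = 3 → deg E v = 3 → ∃ e ∈ E, u ∈ e ∧ v ∈ e := by
  classical
  intro u v _ hu hv
  by_contra! hno
  have hcount := card_filter_notMem_add_deg_add_deg hno
  have hrest : Intersecting ((E.filter (u ∉ ·)).filter (v ∉ ·)) :=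
    hi.mono ((filter_subset _ _).trans (filter_subset _ _))
  obtain ⟨C, hC, hcov⟩ := hrest.exists_isCover_card_le_one (by omega)
  have hcover : IsCover E (insert u (insert v C)) :=
    (hcov.insert_of_filter_notMem v).insert_of_filter_notMem u
  have hτ3 : coverNum E ≤ 3 := calc
    coverNum E ≤ #(insert u (insert v C)) := coverNum_le_card hcover
    _ ≤ #C + 1 + 1 := (card_insert_le _ _).trans (Nat.succ_le_succ (card_insert_le _ _))
    _ ≤ 3 := by omega
  omega

theorem stmt4 {V : Type*} (part : V → Fin 6) (E : Finset (Finset V))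
    (hp : Partite 6 part E) (hi : Intersecting E) (h8 : E.card = 8)
    (hτ : coverNum E = 4) :
    ∀ u v : V, u ≠ v → deg E u = 3 → deg E v = 3 → ∃ e ∈ E, u ∈ e ∧ v ∈ e :=
  stmt4_general E hi h8 hτ
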